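/- For n ≥ 0, T_{n+1}^{(r,k)}(x|λ) = (x-r) T_n^{(r,k)}(x|λ) - (rλ/(1-λ)) T_n^{(r+1,k)}(x|λ) - (1/(n+1)) Σ_{l=0}^{n+1} C(n+1,l) B_l [T_{n+1-l}^{(r,k)}(x|λ) - T_{n+1-l}^{(r,k-1)}(x|λ)], where B_l are the ordinary Bernoulli numbers. -/

import Mathlib

/-!
Write `u = 1 - e^{-t}` and `G = (1-λ)/(e^t-λ)`, so that `u · Σ T_n^{(r,k)}(x|λ) t^n/n!` is
`F_{r,k} = G^r Li_k(u) e^{xt}`. Each factor has a simple logarithmic derivative: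
`(e^t-λ) (G^r)' = -r e^t G^r`, `u Li_k(u)' = e^{-t} Li_{k-1}(u)` and `(e^{xt})' = x e^{xt}`.
Differentiating `u A = F_{r,k}` therefore gives a linear differential equation for
`A = Σ T_n t^n/n!`, in which `e^t/(e^t-λ) = 1 + λ/(1-λ) G` produces the `T^{(r+1,k)}` term and
`e^{-t}/u = 1/(e^t-1) = B(t)/t` the Bernoulli convolution. The recurrence is the coefficient of
`t^{n+1}` in `t A' = (x-r) t A - rλ/(1-λ) t A^{(r+1,k)} - B(t) (A - A^{(r,k-1)})`.
-/

open PowerSeries Finset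

/-- e^{xt} as a formal power series. -/
noncomputable def expX (x : ℂ) : PowerSeries ℂ := rescale x (exp ℂ)

/-- 1 - e^{-t} as a formal power series. -/
noncomputable def oneSubExpNeg : PowerSeries ℂ := 1 - rescale (-1) (exp ℂ)

/-- Li_k(1-e^{-t}) = Σ_{m≥1} (1-e^{-t})^m / m^k as a formal power series. -/
noncomputable def polyLogC (k : ℤ) : PowerSeries ℂ :=
  mk fun n => ∑ m ∈ Finset.Icc 1 n, (coeff n (oneSubExpNeg ^ m)) * ((m : ℂ) ^ k)⁻¹

/-- integer power of a power series (inverse via `PowerSeries.inv`). -/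
noncomputable def zpowS (f : PowerSeries ℂ) (r : ℤ) : PowerSeries ℂ :=
  f ^ r.toNat * (f⁻¹) ^ (-r).toNat

/-- (1-λ)/(e^t-λ). -/
noncomputable def feBase (l : ℂ) : PowerSeries ℂ :=
  C (1 - l) * (exp ℂ - C l)⁻¹

/-- exponential generating function Σ f(n) t^n/n!. -/
noncomputable def GF (f : ℕ → ℂ) : PowerSeries ℂ := mk fun n => f n / n.factorial

/-- Stirling numbers of the second kind: (e^t-1)^m = m! Σ_l S2(l,m) t^l/l!. -/
noncomputable def S2 (n m : ℕ) : ℂ :=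
  (n.factorial : ℂ) / (m.factorial : ℂ) * coeff n ((exp ℂ - 1) ^ m)

section LogDerivative

variable {R A : Type*} [CommRing R] [CommRing A] [Algebra R A] (D : Derivation R A A) {a b : A}

theorem Derivation.mul_apply_pow_eq {f : A} (h : a * D f = b * f) (n : ℕ) :
    a * D (f ^ n) = n * b * f ^ n := by
  induction n with
  | zero => simp
  | succ n ih =>
    rw [pow_succ, D.leibniz, smul_eq_mul, smul_eq_mul]
    push_cast
    linear_combination f ^ n * h + f * ih

theorem Derivation.mul_apply_units_inv_eq {U : Aˣ} (h : a * D U = b * U) :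
    a * D ↑U⁻¹ = -b * ↑U⁻¹ := by
  rw [D.leibniz_of_mul_eq_one U.inv_mul, smul_eq_mul]
  linear_combination (-(↑U⁻¹ : A) ^ 2) * h - b * (↑U⁻¹ : A) * U.inv_mul

theorem Derivation.mul_apply_units_zpow_eq {U : Aˣ} (h : a * D U = b * U) (r : ℤ) :
    a * D ↑(U ^ r) = r * b * ↑(U ^ r) := by
  obtain ⟨m, rfl | rfl⟩ := Int.eq_nat_or_neg r
  · simpa using D.mul_apply_pow_eq h m
  · simpa [zpow_neg, ← inv_pow] using D.mul_apply_pow_eq (D.mul_apply_units_inv_eq h) m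

end LogDerivative

namespace PowerSeries

theorem derivative_rescale {R : Type*} [CommRing R] (a : R) (f : R⟦X⟧) :
    d⁄dX R (rescale a f) = C a * rescale a (d⁄dX R f) := by
  ext n
  simp only [coeff_derivative, coeff_rescale, coeff_C_mul, pow_succ']
  ring

theorem val_inv_eq_inv_val {k : Type*} [Field k] (U : k⟦X⟧ˣ) :
    ((U⁻¹ : k⟦X⟧ˣ) : k⟦X⟧) = (U : k⟦X⟧)⁻¹ :=
  ((inv_eq_iff_mul_eq_one ((U.isUnit.map constantCoeff).ne_zero)).mpr U.inv_mul).symm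

end PowerSeries

theorem zpowS_units (U : ℂ⟦X⟧ˣ) (r : ℤ) : zpowS U r = ↑(U ^ r) := by
  obtain ⟨m, rfl | rfl⟩ := Int.eq_nat_or_neg r
  · simp [zpowS]
  · simp [zpowS, zpow_neg, ← val_inv_eq_inv_val]

theorem zpowS_add_one {f : ℂ⟦X⟧} (hf : IsUnit f) (r : ℤ) :
    zpowS f (r + 1) = zpowS f r * f := by
  obtain ⟨U, rfl⟩ := hf
  rw [zpowS_units, zpowS_units, zpow_add_one, Units.val_mul]

theorem mul_derivative_zpowS {f a b : ℂ⟦X⟧} (hf : IsUnit f) (h : a * d⁄dX ℂ f = b * f)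
    (r : ℤ) :
    a * d⁄dX ℂ (zpowS f r) = r * b * zpowS f r := by
  obtain ⟨U, rfl⟩ := hf
  rw [zpowS_units]
  exact (d⁄dX ℂ).mul_apply_units_zpow_eq h r

section feBase

variable {lam : ℂ}

theorem exp_sub_C_mul_feBase (hlam : lam ≠ 1) : (exp ℂ - C lam) * feBase lam = C (1 - lam) := by
  have hw : constantCoeff (exp ℂ - C lam) ≠ 0 := by
    simpa [sub_eq_zero] using hlam.symm
  rw [feBase, mul_left_comm, PowerSeries.mul_inv_cancel _ hw, mul_one]

theorem isUnit_feBase (hlam : lam ≠ 1) : IsUnit (feBase lam) :=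
  isUnit_of_mul_isUnit_right <| (exp_sub_C_mul_feBase hlam).symm ▸
    (isUnit_iff_ne_zero.mpr (sub_ne_zero.mpr hlam.symm)).map C

theorem exp_sub_C_mul_derivative_feBase (hlam : lam ≠ 1) :
    (exp ℂ - C lam) * d⁄dX ℂ (feBase lam) = -exp ℂ * feBase lam := by
  have h := congrArg (d⁄dX ℂ) (exp_sub_C_mul_feBase hlam)
  rw [Derivation.leibniz, smul_eq_mul, smul_eq_mul, map_sub, derivative_exp, derivative_C,
    derivative_C, sub_zero] at h
  linear_combination h

end feBase

theorem constantCoeff_rescale_exp (a : ℂ) : constantCoeff (rescale a (exp ℂ)) = 1 := by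
  simp [← coeff_zero_eq_constantCoeff_apply, coeff_rescale]

theorem derivative_oneSubExpNeg : d⁄dX ℂ oneSubExpNeg = rescale (-1) (exp ℂ) := by
  simp [oneSubExpNeg, derivative_rescale, derivative_exp]

theorem oneSubExpNeg_ne_zero : oneSubExpNeg ≠ 0 := fun h => by
  simpa [h, constantCoeff_rescale_exp] using congrArg constantCoeff derivative_oneSubExpNeg

theorem constantCoeff_oneSubExpNeg : constantCoeff oneSubExpNeg = 0 := by
  simp [oneSubExpNeg, constantCoeff_rescale_exp]

theorem rescale_neg_one_exp_mul_exp_sub_one :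
    rescale (-1) (exp ℂ) * (exp ℂ - 1) = oneSubExpNeg := by
  have h := exp_mul_exp_eq_exp_add (-1 : ℂ) 1
  rw [rescale_one, neg_add_cancel, rescale_zero, RingHom.id_apply, RingHom.comp_apply,
    constantCoeff_exp, map_one] at h
  rw [oneSubExpNeg, mul_sub, h, mul_one]

noncomputable def polyLogPartialSum (k : ℤ) (N : ℕ) : ℂ⟦X⟧ :=
  ∑ m ∈ Icc 1 N, C ((m : ℂ) ^ k)⁻¹ * oneSubExpNeg ^ m

theorem coeff_oneSubExpNeg_pow_of_lt {n m : ℕ} (h : n < m) : coeff n (oneSubExpNeg ^ m) = 0 :=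
  X_pow_dvd_iff.mp (pow_dvd_pow_of_dvd (X_dvd_iff.mpr constantCoeff_oneSubExpNeg) m) n h

theorem trunc_polyLogC (k : ℤ) {n N : ℕ} (h : n ≤ N + 1) :
    trunc n (polyLogC k) = trunc n (polyLogPartialSum k N) := by
  ext i
  simp only [coeff_trunc]
  split_ifs with hi
  · rw [polyLogC, coeff_mk, polyLogPartialSum, map_sum]
    refine (sum_subset (Icc_subset_Icc_right (by omega)) fun m hm hm' => ?_).trans
      (sum_congr rfl fun m _ => by rw [coeff_C_mul, mul_comm])
    rw [coeff_oneSubExpNeg_pow_of_lt (by simp at hm hm'; omega), zero_mul]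
  · rfl

theorem oneSubExpNeg_mul_derivative_polyLogPartialSum (k : ℤ) (N : ℕ) :
    oneSubExpNeg * d⁄dX ℂ (polyLogPartialSum k N)
      = rescale (-1) (exp ℂ) * polyLogPartialSum (k - 1) N := by
  have hu : oneSubExpNeg * d⁄dX ℂ oneSubExpNeg = rescale (-1) (exp ℂ) * oneSubExpNeg := by
    rw [derivative_oneSubExpNeg, mul_comm]
  simp only [polyLogPartialSum, map_sum, mul_sum]
  refine sum_congr rfl fun m hm => ?_
  have hm0 : (m : ℂ) ≠ 0 := Nat.cast_ne_zero.mpr (by simp at hm; omega)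
  have hc : ((m : ℂ) ^ k)⁻¹ * m = ((m : ℂ) ^ (k - 1))⁻¹ := by
    rw [zpow_sub_one₀ hm0, mul_inv, inv_inv]
  rw [Derivation.leibniz, derivative_C, smul_zero, add_zero, smul_eq_mul, ← hc, map_mul,
    map_natCast]
  linear_combination C ((m : ℂ) ^ k)⁻¹ * (d⁄dX ℂ).mul_apply_pow_eq hu m

theorem coeff_mul_eq_of_trunc_eq {R : Type*} [CommRing R] {f g g' : R⟦X⟧} {n : ℕ}
    (h : trunc (n + 1) g = trunc (n + 1) g') : coeff n (f * g) = coeff n (f * g') := by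
  rw [coeff_mul_eq_coeff_trunc_mul_trunc f g n.lt_succ_self, h,
    ← coeff_mul_eq_coeff_trunc_mul_trunc f g' n.lt_succ_self]

theorem oneSubExpNeg_mul_derivative_polyLogC (k : ℤ) :
    oneSubExpNeg * d⁄dX ℂ (polyLogC k) = rescale (-1) (exp ℂ) * polyLogC (k - 1) := by
  ext n
  have hD : trunc (n + 1) (d⁄dX ℂ (polyLogC k))
      = trunc (n + 1) (d⁄dX ℂ (polyLogPartialSum k (n + 1))) := by
    rw [trunc_derivative, trunc_derivative, trunc_polyLogC k le_rfl]
  rw [coeff_mul_eq_of_trunc_eq hD, oneSubExpNeg_mul_derivative_polyLogPartialSum,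
    coeff_mul_eq_of_trunc_eq (trunc_polyLogC (k - 1) (by omega)).symm]

theorem derivative_expX (x : ℂ) : d⁄dX ℂ (expX x) = C x * expX x := by
  rw [expX, derivative_rescale, derivative_exp]

-- The generating function of `T_n^{(r,k)}(x|λ)` multiplied by `1 - e^{-t}`.
noncomputable def mixedGF (lam : ℂ) (r k : ℤ) (x : ℂ) : ℂ⟦X⟧ :=
  zpowS (feBase lam) r * polyLogC k * expX x

section mixedGF

variable {lam : ℂ} (r k : ℤ) (x : ℂ)

theorem mixedGF_add_one (hlam : lam ≠ 1) :
    mixedGF lam (r + 1) k x = feBase lam * mixedGF lam r k x := by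
  rw [mixedGF, mixedGF, zpowS_add_one (isUnit_feBase hlam)]
  ring

theorem exp_sub_C_mul_derivative_mixedGF (hlam : lam ≠ 1) :
    (exp ℂ - C lam) * (oneSubExpNeg * d⁄dX ℂ (mixedGF lam r k x))
      = (C x * (exp ℂ - C lam) - r * exp ℂ) * oneSubExpNeg * mixedGF lam r k x
        + (exp ℂ - C lam) * rescale (-1) (exp ℂ) * mixedGF lam r (k - 1) x := by
  have hG := mul_derivative_zpowS (isUnit_feBase hlam) (exp_sub_C_mul_derivative_feBase hlam) r
  simp only [mixedGF, Derivation.leibniz, smul_eq_mul, derivative_expX]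
  linear_combination (oneSubExpNeg * polyLogC k * expX x) * hG
    + ((exp ℂ - C lam) * zpowS (feBase lam) r * expX x) * oneSubExpNeg_mul_derivative_polyLogC k

variable {r k x} {A A' A'' : ℂ⟦X⟧}

theorem exp_sub_C_mul_eq_C_mul_of_add_one (hlam : lam ≠ 1) (hA : oneSubExpNeg * A = mixedGF lam r k x)
    (hA' : oneSubExpNeg * A' = mixedGF lam (r + 1) k x) :
    (exp ℂ - C lam) * A' = C (1 - lam) * A := by
  apply mul_left_cancel₀ oneSubExpNeg_ne_zero
  linear_combination (exp ℂ - C lam) * hA' - C (1 - lam) * hA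
    + (exp ℂ - C lam) * mixedGF_add_one r k x hlam
    + mixedGF lam r k x * exp_sub_C_mul_feBase hlam

theorem oneSubExpNeg_mul_derivative_eq (hlam : lam ≠ 1)
    (hA : oneSubExpNeg * A = mixedGF lam r k x)
    (hA' : oneSubExpNeg * A' = mixedGF lam (r + 1) k x)
    (hA'' : oneSubExpNeg * A'' = mixedGF lam r (k - 1) x) :
    oneSubExpNeg * d⁄dX ℂ A = C (x - r) * oneSubExpNeg * A
      - C (r * lam / (1 - lam)) * oneSubExpNeg * A' - rescale (-1) (exp ℂ) * (A - A'') := by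
  have hDA : oneSubExpNeg * d⁄dX ℂ A + rescale (-1) (exp ℂ) * A
      = d⁄dX ℂ (mixedGF lam r k x) := by
    rw [← hA, Derivation.leibniz, derivative_oneSubExpNeg, smul_eq_mul, smul_eq_mul]
    ring
  have hc : C (r * lam / (1 - lam)) * C (1 - lam) = r * C lam := by
    rw [← map_mul, div_mul_cancel₀ _ (sub_ne_zero.mpr hlam.symm), map_mul, map_intCast]
  have hw : exp ℂ - C lam ≠ 0 := left_ne_zero_of_mul <| (exp_sub_C_mul_feBase hlam).symm ▸
    (map_ne_zero C).mpr (sub_ne_zero.mpr hlam.symm)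
  apply mul_left_cancel₀ (mul_ne_zero oneSubExpNeg_ne_zero hw)
  rw [map_sub, map_intCast]
  linear_combination (oneSubExpNeg * (exp ℂ - C lam)) * hDA
    + exp_sub_C_mul_derivative_mixedGF r k x hlam
    - ((C x * (exp ℂ - C lam) - r * exp ℂ) * oneSubExpNeg) * hA
    - ((exp ℂ - C lam) * rescale (-1) (exp ℂ)) * hA''
    + (C (r * lam / (1 - lam)) * oneSubExpNeg ^ 2) * exp_sub_C_mul_eq_C_mul_of_add_one hlam hA hA'
    + (oneSubExpNeg ^ 2 * A) * hc

theorem X_mul_derivative_eq (hlam : lam ≠ 1)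
    (hA : oneSubExpNeg * A = mixedGF lam r k x)
    (hA' : oneSubExpNeg * A' = mixedGF lam (r + 1) k x)
    (hA'' : oneSubExpNeg * A'' = mixedGF lam r (k - 1) x) :
    X * d⁄dX ℂ A = C (x - r) * X * A - C (r * lam / (1 - lam)) * X * A'
      - bernoulliPowerSeries ℂ * (A - A'') := by
  apply mul_left_cancel₀ oneSubExpNeg_ne_zero
  linear_combination X * oneSubExpNeg_mul_derivative_eq hlam hA hA' hA''
    - (bernoulliPowerSeries ℂ * (A - A'')) * rescale_neg_one_exp_mul_exp_sub_one
    + (rescale (-1) (exp ℂ) * (A - A'')) * bernoulliPowerSeries_mul_exp_sub_one ℂ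

end mixedGF

theorem coeff_GF (f : ℕ → ℂ) (n : ℕ) : coeff n (GF f) = f n / n.factorial :=
  coeff_mk _ _

theorem GF_sub (f g : ℕ → ℂ) : GF f - GF g = GF fun n => f n - g n := by
  ext n
  simp only [map_sub, coeff_GF, sub_div]

theorem GF_mul_GF (f g : ℕ → ℂ) :
    GF f * GF g = GF fun n => ∑ l ∈ range (n + 1), (n.choose l : ℂ) * f l * g (n - l) := by
  ext n
  rw [coeff_mul, Nat.sum_antidiagonal_eq_sum_range_succ_mk, coeff_GF, sum_div]
  refine sum_congr rfl fun l hl => ?_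
  have hfact := n.factorial_ne_zero
  rw [coeff_GF, coeff_GF, Nat.cast_choose ℂ (Nat.lt_succ_iff.mp (mem_range.mp hl))]
  field_simp

theorem bernoulliPowerSeries_eq_GF :
    bernoulliPowerSeries ℂ = GF fun n => ((bernoulli n : ℚ) : ℂ) := by
  ext n
  simp [bernoulliPowerSeries, coeff_GF]

theorem stmt6 (lam : ℂ) (hlam : lam ≠ 1) (r k : ℤ) (T T' T'' : ℕ → ℂ → ℂ)
    (hT : ∀ x : ℂ, oneSubExpNeg * GF (fun n => T n x)
        = zpowS (feBase lam) (r) * polyLogC (k) * expX x)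
    (hT' : ∀ x : ℂ, oneSubExpNeg * GF (fun n => T' n x)
        = zpowS (feBase lam) (r + 1) * polyLogC (k) * expX x)
    (hT'' : ∀ x : ℂ, oneSubExpNeg * GF (fun n => T'' n x)
        = zpowS (feBase lam) (r) * polyLogC (k - 1) * expX x) :
    ∀ (n : ℕ) (x : ℂ),
      T (n + 1) x = (x - (r : ℂ)) * T n x - ((r : ℂ) * lam / (1 - lam)) * T' n x -
        (1 / ((n : ℂ) + 1)) * ∑ l ∈ range (n + 2),
          ((n + 1).choose l : ℂ) * ((bernoulli l : ℚ) : ℂ) * (T (n + 1 - l) x - T'' (n + 1 - l) x) := by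
  intro n x
  have h := congrArg (coeff (n + 1)) (X_mul_derivative_eq hlam (hT x) (hT' x) (hT'' x))
  rw [bernoulliPowerSeries_eq_GF, GF_sub, GF_mul_GF] at h
  simp only [map_sub, mul_assoc, sub_mul, coeff_C_mul, coeff_succ_X_mul, coeff_derivative,
    coeff_GF, Nat.factorial_succ] at h
  have hfact : (n.factorial : ℂ) ≠ 0 := Nat.cast_ne_zero.mpr n.factorial_ne_zero
  have hlam' : 1 - lam ≠ 0 := sub_ne_zero.mpr hlam.symm
  push_cast at h
  field_simp at h ⊢
  linear_combination h
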